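/- Let n ≥ 2 and let u be an injective transpositional sequence on Fin n such that every vertex of Fin n lies in the support of some term of u and the graph G(u) is connected. Suppose there exist two distinct vertices a ≠ b such that a is adjacent in G(u) to every other vertex of Fin n and b is adjacent in G(u) to every other vertex of Fin n (two central vertices). Then u is permutationally complete. In particular, the injective sequence whose terms are all n(n−1)/2 transpositions of Fin n (the complete graph K_n) is permutationally complete. -/

import Mathlib

/-- The set of products (compositions, in order) of all rearrangements of `s`. -/
def ProdSet {n : ℕ} (s : List (Equiv.Perm (Fin n))) : Set (Equiv.Perm (Fin n)) :=
  {g | ∃ r : List (Equiv.Perm (Fin n)), r.Perm s ∧ r.prod = g}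

/-- `s` is permutationally complete iff `ProdSet s` is the set of even permutations
or the set of odd permutations. -/
def PermComplete {n : ℕ} (s : List (Equiv.Perm (Fin n))) : Prop :=
  ProdSet s = {g | Equiv.Perm.sign g = 1} ∨ ProdSet s = {g | Equiv.Perm.sign g = -1}

/-- `u` is a transpositional sequence: each term is a transposition. -/
def IsTranspositional {n : ℕ} (u : List (Equiv.Perm (Fin n))) : Prop :=
  ∀ g ∈ u, ∃ x y : Fin n, x ≠ y ∧ g = Equiv.swap x y

/-- The simple graph of a transpositional sequence: an edge `{x,y}` iff `(x y)` occurs in `u`. -/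
def TranspGraph {n : ℕ} (u : List (Equiv.Perm (Fin n))) : SimpleGraph (Fin n) where
  Adj x y := x ≠ y ∧ Equiv.swap x y ∈ u
  symm := by
    constructor
    intro x y h
    exact ⟨h.1.symm, by rw [Equiv.swap_comm]; exact h.2⟩
  loopless := by
    constructor
    intro x h
    exact h.1 rfl

/-- `s` is conjugacy invariant iff all elements of `ProdSet s` are pairwise conjugate. -/
def ConjInv {n : ℕ} (s : List (Equiv.Perm (Fin n))) : Prop :=
  ∀ f ∈ ProdSet s, ∀ g ∈ ProdSet s, IsConj f g

/-!
Write `K` for the transpositions `(a x)`, `(b x)` with `x ∈ W = Fin n \ {a, b}`, so that the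
double star is `(a b) :: K`. A sequence containing every transposition at `a` and at `b`
contains the double star, and adding terms preserves permutational completeness, so it suffices
that every odd permutation is a product of a rearrangement of the double star.

By strong induction on `W`, every even `τ` of `{a, b} ∪ W` moving `a` or `b` is a product of a
rearrangement of `K`: choosing `d ∈ W` according to where `τ` sends `a` and `b`, one of
`(b d) τ (a d)`, `(a d) τ (b d)`, `τ (b d) (a d)` (products in `Perm`, right factor first)
fixes `d` and still moves `a` or `b`.
An odd `σ` is then `(a b) τ` with `τ = (a b) σ`, unless `σ` swaps `a` and `b`; in that case
`(b d) σ (a d)` is odd and fixes `d`, and one inducts again.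
-/

open Equiv Equiv.Perm

variable {n : ℕ}

section ProdSet

variable {s t : List (Perm (Fin n))} {f g π : Perm (Fin n)}

theorem prodSet_congr (h : s.Perm t) : ProdSet s = ProdSet t := by
  ext g
  exact ⟨fun ⟨r, hr, hg⟩ => ⟨r, hr.trans h, hg⟩, fun ⟨r, hr, hg⟩ => ⟨r, hr.trans h.symm, hg⟩⟩

theorem prod_mem_prodSet (s : List (Perm (Fin n))) : s.prod ∈ ProdSet s :=
  ⟨s, List.Perm.refl s, rfl⟩

theorem mul_mem_prodSet_append (hf : f ∈ ProdSet s) (hg : g ∈ ProdSet t) :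
    f * g ∈ ProdSet (s ++ t) := by
  obtain ⟨r, hr, rfl⟩ := hf
  obtain ⟨q, hq, rfl⟩ := hg
  exact ⟨r ++ q, hr.append hq, List.prod_append⟩

theorem mul_mul_mem_prodSet_cons_cons (h : π ∈ ProdSet s) :
    f * π * g ∈ ProdSet (f :: g :: s) := by
  have hmem := mul_mem_prodSet_append (mul_mem_prodSet_append (prod_mem_prodSet [f]) h)
    (prod_mem_prodSet [g])
  simp only [List.prod_singleton, List.cons_append] at hmem
  rwa [prodSet_congr (List.perm_append_comm.cons f)] at hmem

theorem mul_mul_mem_prodSet_cons_cons' (h : π ∈ ProdSet s) :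
    π * f * g ∈ ProdSet (f :: g :: s) := by
  have hmem := mul_mem_prodSet_append h (prod_mem_prodSet [f, g])
  simp only [List.prod_cons, List.prod_nil, mul_one, ← mul_assoc] at hmem
  rwa [prodSet_congr List.perm_append_comm] at hmem

theorem sign_eq_of_mem_prodSet (hg : g ∈ ProdSet s) : sign g = sign s.prod := by
  obtain ⟨r, hr, rfl⟩ := hg
  rw [map_list_prod, map_list_prod]
  exact (hr.map _).prod_eq

theorem permComplete_iff : PermComplete s ↔ ∀ g, sign g = sign s.prod → g ∈ ProdSet s := by
  constructor
  · rintro (h | h) g hg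
    all_goals
      have hs := prod_mem_prodSet s
      rw [h] at hs ⊢
      exact hg.trans hs
  · intro h
    have heq : ProdSet s = {g | sign g = sign s.prod} :=
      Set.Subset.antisymm (fun _ hg => sign_eq_of_mem_prodSet hg) h
    rcases Int.units_eq_one_or (sign s.prod) with hs | hs
    · exact .inl (hs ▸ heq)
    · exact .inr (hs ▸ heq)

theorem PermComplete.of_subperm (ht : PermComplete t) (hts : t.Subperm s) : PermComplete s := by
  rw [permComplete_iff] at ht ⊢
  obtain ⟨l, hl, hls⟩ := hts
  obtain ⟨R, hR⟩ := hls.exists_perm_append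
  have hsR : s.Perm (t ++ R) := hR.trans (hl.append_right R)
  have hs : sign s.prod = sign t.prod * sign R.prod := by
    rw [sign_eq_of_mem_prodSet (prodSet_congr hsR ▸ prod_mem_prodSet s), List.prod_append,
      map_mul]
  intro g hg
  have hsign : sign (g * R.prod⁻¹) = sign t.prod := by
    rw [map_mul, map_inv, hg, hs, mul_inv_cancel_right]
  simpa [prodSet_congr hsR] using mul_mem_prodSet_append (ht _ hsign) (prod_mem_prodSet R)

end ProdSet

section Support

variable {α : Type*} [DecidableEq α] [Fintype α] {a b d : α} {S W : Finset α}
  {f g h π : Perm α}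

theorem swap_support_subset {x y : α} (hx : x ∈ S) (hy : y ∈ S) : (swap x y).support ⊆ S := by
  intro z hz
  rcases (swap_apply_ne_self_iff.1 (mem_support.1 hz)).2 with rfl | rfl <;> assumption

theorem support_mul_mul_subset (hf : f.support ⊆ S) (hg : g.support ⊆ S) (hh : h.support ⊆ S) :
    (f * g * h).support ⊆ S :=
  (support_mul_le _ _).trans (sup_le ((support_mul_le _ _).trans (sup_le hf hg)) hh)

theorem support_subset_erase_of_apply_eq (hπ : π.support ⊆ insert a (insert b W))
    (hfix : π d = d) (hda : d ≠ a) (hdb : d ≠ b) :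
    π.support ⊆ insert a (insert b (W.erase d)) := by
  rw [← Finset.erase_insert_of_ne hdb.symm, ← Finset.erase_insert_of_ne hda.symm]
  exact fun x hx => Finset.mem_erase.2 ⟨fun h => mem_support.1 hx (h ▸ hfix), hπ hx⟩

theorem eq_one_of_support_subset_pair (hπ : π.support ⊆ {a, b}) (hsign : sign π = 1) :
    π = 1 := by
  have hcard : π.support.card ≤ 2 := (Finset.card_le_card hπ).trans Finset.card_le_two
  have hne : π.support.card ≠ 2 := fun h2 => by
    rw [(card_support_eq_two.1 h2).sign_eq] at hsign
    exact absurd hsign (by decide)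
  exact card_support_le_one.1 (by omega)

end Support

theorem Finset.exists_mem_ne_or_erase_eq_empty {α : Type*} [DecidableEq α] {W : Finset α}
    (hW : W.Nonempty) (x : α) : ∃ d ∈ W, d ≠ x ∨ W.erase d = ∅ := by
  by_cases h : ∃ d ∈ W, d ≠ x
  · obtain ⟨d, hd, hne⟩ := h
    exact ⟨d, hd, .inl hne⟩
  · push Not at h
    obtain ⟨d, hd⟩ := hW
    refine ⟨d, hd, .inr ((W.erase_eq_empty_iff d).2 (.inr ?_))⟩
    exact Finset.eq_singleton_iff_unique_mem.2 ⟨hd, fun y hy => (h y hy).trans (h d hd).symm⟩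

section DoubleStar

variable {a b d e : Fin n} {W : Finset (Fin n)} {σ τ : Perm (Fin n)}

noncomputable def bipartiteSwaps (a b : Fin n) (W : Finset (Fin n)) : List (Perm (Fin n)) :=
  W.toList.map (swap a) ++ W.toList.map (swap b)

noncomputable def doubleStarSwaps (a b : Fin n) (W : Finset (Fin n)) : List (Perm (Fin n)) :=
  swap a b :: bipartiteSwaps a b W

theorem bipartiteSwaps_comm : (bipartiteSwaps a b W).Perm (bipartiteSwaps b a W) :=
  List.perm_append_comm

theorem bipartiteSwaps_perm_erase (hd : d ∈ W) :
    (bipartiteSwaps a b W).Perm (swap a d :: swap b d :: bipartiteSwaps a b (W.erase d)) := by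
  have hW : W.toList.Perm (d :: (W.erase d).toList) := by
    simpa [Finset.insert_erase hd] using Finset.toList_insert (Finset.notMem_erase d W)
  refine ((hW.map _).append (hW.map _)).trans ?_
  simp only [List.map_cons, List.cons_append]
  exact List.perm_middle.cons _

theorem doubleStarSwaps_perm_erase (hd : d ∈ W) :
    (doubleStarSwaps a b W).Perm (swap b d :: swap a d :: doubleStarSwaps a b (W.erase d)) :=
  ((bipartiteSwaps_perm_erase hd).cons _).trans <| (List.Perm.swap _ _ _).trans <|
    ((List.Perm.swap _ _ _).cons _).trans (List.Perm.swap _ _ _)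

/-- The clause `W = ∅` admits the identity, realised by the empty list; for nonempty `W` the
identity is not realised. -/
def RealizesMovingEven (a b : Fin n) (W : Finset (Fin n)) : Prop :=
  ∀ ⦃τ : Perm (Fin n)⦄, sign τ = 1 → τ.support ⊆ insert a (insert b W) →
    (τ a ≠ a ∨ τ b ≠ b ∨ W = ∅) → τ ∈ ProdSet (bipartiteSwaps a b W)

theorem mem_prodSet_bipartiteSwaps_of_apply_left_eq_right
    (ih : ∀ d ∈ W, RealizesMovingEven a b (W.erase d)) (hab : a ≠ b) (ha : a ∉ W) (hb : b ∉ W)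
    (hW : W.Nonempty) (hτ : sign τ = 1) (hsupp : τ.support ⊆ insert a (insert b W))
    (hτab : τ a = b) : τ ∈ ProdSet (bipartiteSwaps a b W) := by
  obtain ⟨d, hd, hdτ⟩ := Finset.exists_mem_ne_or_erase_eq_empty hW (τ b)
  have hda : d ≠ a := ne_of_mem_of_not_mem hd ha
  have hdb : d ≠ b := ne_of_mem_of_not_mem hd hb
  set π := swap b d * τ * swap a d
  have hτπ : τ = swap b d * π * swap a d := by simp [π, mul_assoc]
  have hfix : π d = d := by simp [π, hτab]
  have hτb : τ b ≠ b := fun h => hab (τ.injective (h.trans hτab.symm)).symm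
  have hπb : π b = swap b d (τ b) := by simp [π, swap_apply_of_ne_of_ne hab.symm hdb.symm]
  have hmove : π a ≠ a ∨ π b ≠ b ∨ W.erase d = ∅ := by
    rcases hdτ with h | h
    · rw [hπb, swap_apply_of_ne_of_ne hτb (Ne.symm h)]
      exact .inr (.inl hτb)
    · exact .inr (.inr h)
  have hmem := ih d hd (by simp [hτ, hda.symm, hdb.symm])
    (support_subset_erase_of_apply_eq (support_mul_mul_subset
      (swap_support_subset (by simp) (by simp [hd])) hsupp
      (swap_support_subset (by simp) (by simp [hd]))) hfix hda hdb) hmove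
  rw [hτπ, prodSet_congr ((bipartiteSwaps_perm_erase hd).trans (List.Perm.swap _ _ _))]
  exact mul_mul_mem_prodSet_cons_cons hmem

theorem mem_prodSet_bipartiteSwaps_of_apply_right_eq_left
    (ih : ∀ d ∈ W, RealizesMovingEven a b (W.erase d)) (hab : a ≠ b) (ha : a ∉ W) (hb : b ∉ W)
    (he : e ∈ W) (hτ : sign τ = 1) (hsupp : τ.support ⊆ insert a (insert b W))
    (hτa : τ a ≠ a) (heτ : e ≠ τ a) (hτb : τ b = a) : τ ∈ ProdSet (bipartiteSwaps a b W) := by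
  have hea : e ≠ a := ne_of_mem_of_not_mem he ha
  have heb : e ≠ b := ne_of_mem_of_not_mem he hb
  set π := swap a e * τ * swap b e
  have hτπ : τ = swap a e * π * swap b e := by simp [π, mul_assoc]
  have hfix : π e = e := by simp [π, hτb]
  have hπa : π a = τ a := by
    simp [π, swap_apply_of_ne_of_ne hab hea.symm, swap_apply_of_ne_of_ne hτa heτ.symm]
  have hmem := ih e he (by simp [hτ, hea.symm, heb.symm])
    (support_subset_erase_of_apply_eq (support_mul_mul_subset
      (swap_support_subset (by simp) (by simp [he])) hsupp
      (swap_support_subset (by simp) (by simp [he]))) hfix hea heb) (.inl (hπa ▸ hτa))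
  rw [hτπ, prodSet_congr (bipartiteSwaps_perm_erase he)]
  exact mul_mul_mem_prodSet_cons_cons hmem

theorem mem_prodSet_bipartiteSwaps_of_apply_left_mem
    (ih : ∀ d ∈ W, RealizesMovingEven a b (W.erase d)) (hab : a ≠ b) (ha : a ∉ W) (hb : b ∉ W)
    (hd : d ∈ W) (hτ : sign τ = 1) (hsupp : τ.support ⊆ insert a (insert b W)) (hτa : τ a = d)
    (hmove : τ b ≠ a ∨ ∀ e ∈ W, e = d) : τ ∈ ProdSet (bipartiteSwaps a b W) := by
  have hda : d ≠ a := ne_of_mem_of_not_mem hd ha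
  have hdb : d ≠ b := ne_of_mem_of_not_mem hd hb
  set π := τ * swap b d * swap a d
  have hτπ : τ = π * swap a d * swap b d := by simp [π, mul_assoc]
  have hfix : π d = d := by simp [π, swap_apply_of_ne_of_ne hab hda.symm, hτa]
  have hπa : π a = τ b := by simp [π]
  have hπmove : π a ≠ a ∨ π b ≠ b ∨ W.erase d = ∅ := by
    rcases hmove with h | h
    · exact .inl (hπa ▸ h)
    · exact .inr (.inr ((W.erase_eq_empty_iff d).2
        (.inr (Finset.eq_singleton_iff_unique_mem.2 ⟨hd, h⟩))))
  have hmem := ih d hd (by simp [hτ, hda.symm, hdb.symm])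
    (support_subset_erase_of_apply_eq (support_mul_mul_subset hsupp
      (swap_support_subset (by simp) (by simp [hd]))
      (swap_support_subset (by simp) (by simp [hd]))) hfix hda hdb) hπmove
  rw [hτπ, prodSet_congr (bipartiteSwaps_perm_erase hd)]
  exact mul_mul_mem_prodSet_cons_cons' hmem

theorem realizesMovingEven_bipartiteSwaps (W : Finset (Fin n)) (hab : a ≠ b) (ha : a ∉ W)
    (hb : b ∉ W) : RealizesMovingEven a b W := by
  induction W using Finset.strongInduction generalizing a b with
  | H W ih =>
  intro τ hτ hsupp hmove
  rcases W.eq_empty_or_nonempty with rfl | hW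
  · rw [eq_one_of_support_subset_pair (by simpa using hsupp) hτ]
    exact ⟨[], by simp [bipartiteSwaps], rfl⟩
  wlog hτa : τ a ≠ a generalizing a b
  · have hτb : τ b ≠ b := by
      rcases hmove with h | h | h
      exacts [absurd h hτa, h, absurd h hW.ne_empty]
    rw [prodSet_congr bipartiteSwaps_comm]
    exact this hab.symm hb ha (by rwa [Finset.insert_comm]) (.inl hτb) hτb
  have ih_erase : ∀ d ∈ W, RealizesMovingEven a b (W.erase d) := fun d hd =>
    ih _ (Finset.erase_ssubset hd) hab (fun h => ha (Finset.mem_of_mem_erase h))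
      (fun h => hb (Finset.mem_of_mem_erase h))
  by_cases hτab : τ a = b
  · exact mem_prodSet_bipartiteSwaps_of_apply_left_eq_right ih_erase hab ha hb hW hτ hsupp hτab
  have hd : τ a ∈ W := by
    have h := hsupp (apply_mem_support.2 (mem_support.2 hτa))
    simp only [Finset.mem_insert] at h
    tauto
  by_cases hba : τ b = a ∧ ∃ e ∈ W, e ≠ τ a
  · obtain ⟨hτb, e, he, heτ⟩ := hba
    exact mem_prodSet_bipartiteSwaps_of_apply_right_eq_left ih_erase hab ha hb he hτ hsupp hτa heτ
      hτb
  · refine mem_prodSet_bipartiteSwaps_of_apply_left_mem ih_erase hab ha hb hd hτ hsupp rfl ?_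
    push Not at hba
    by_cases hτb : τ b = a
    exacts [.inr (hba hτb), .inl hτb]

theorem mem_prodSet_doubleStarSwaps (W : Finset (Fin n)) (hab : a ≠ b) (ha : a ∉ W) (hb : b ∉ W)
    (hσ : sign σ = -1) (hsupp : σ.support ⊆ insert a (insert b W)) :
    σ ∈ ProdSet (doubleStarSwaps a b W) := by
  induction W using Finset.strongInduction generalizing σ with
  | H W ih =>
  by_cases hswapped : σ a = b ∧ σ b = a ∧ W.Nonempty
  · obtain ⟨hσa, -, d, hd⟩ := hswapped
    have hda : d ≠ a := ne_of_mem_of_not_mem hd ha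
    have hdb : d ≠ b := ne_of_mem_of_not_mem hd hb
    set π := swap b d * σ * swap a d
    have hσπ : σ = swap b d * π * swap a d := by simp [π, mul_assoc]
    have hfix : π d = d := by simp [π, hσa]
    have hmem := ih _ (Finset.erase_ssubset hd) (fun h => ha (Finset.mem_of_mem_erase h))
      (fun h => hb (Finset.mem_of_mem_erase h)) (by simp [hσ, hda.symm, hdb.symm])
      (support_subset_erase_of_apply_eq (support_mul_mul_subset
        (swap_support_subset (by simp) (by simp [hd])) hsupp
        (swap_support_subset (by simp) (by simp [hd]))) hfix hda hdb)
    rw [hσπ, prodSet_congr (doubleStarSwaps_perm_erase hd)]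
    exact mul_mul_mem_prodSet_cons_cons hmem
  · have hστ : σ = swap a b * (swap a b * σ) := by simp [← mul_assoc]
    rw [hστ]
    refine mul_mem_prodSet_append (prod_mem_prodSet [swap a b])
      (realizesMovingEven_bipartiteSwaps W hab ha hb (by simp [hσ, hab])
        ((support_mul_le _ _).trans (sup_le (swap_support_subset (by simp) (by simp)) hsupp)) ?_)
    simp only [Perm.mul_apply, ne_eq, swap_apply_eq_iff, swap_apply_left, swap_apply_right,
      ← Finset.not_nonempty_iff_eq_empty]
    tauto

theorem doubleStarSwaps_nodup (hab : a ≠ b) (ha : a ∉ W) (hb : b ∉ W) :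
    (doubleStarSwaps a b W).Nodup := by
  have hne : ∀ x ∈ W, x ≠ a := fun x hx => ne_of_mem_of_not_mem hx ha
  refine List.nodup_cons.2 ⟨?_, List.nodup_append.2 ⟨?_, ?_, ?_⟩⟩
  · simp only [bipartiteSwaps, List.mem_append, List.mem_map, Finset.mem_toList, not_or,
      not_exists, not_and]
    refine ⟨fun x hx h => hb ?_, fun x hx h => hab ?_⟩
    · rwa [← swap_injective_of_left a h]
    · simpa [swap_apply_of_ne_of_ne hab (hne x hx).symm] using congrArg (· a) h
  · exact W.nodup_toList.map (swap_injective_of_left a)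
  · exact W.nodup_toList.map (swap_injective_of_left b)
  · intro g hg g' hg' h
    obtain ⟨x, hx, rfl⟩ := List.mem_map.1 hg
    obtain ⟨y, hy, rfl⟩ := List.mem_map.1 hg'
    rw [Finset.mem_toList] at hx hy
    have hxa := congrArg (· a) h
    simp only [swap_apply_left, swap_apply_of_ne_of_ne hab (hne y hy).symm] at hxa
    exact hne x hx hxa

end DoubleStar

theorem permComplete_doubleStarSwaps {a b : Fin n} (hab : a ≠ b) :
    PermComplete (doubleStarSwaps a b (Finset.univ \ {a, b})) := by
  have hV : insert a (insert b (Finset.univ \ {a, b})) = Finset.univ := by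
    ext x
    by_cases x = a <;> by_cases x = b <;> simp_all
  have hmem : ∀ σ : Perm (Fin n), sign σ = -1 →
      σ ∈ ProdSet (doubleStarSwaps a b (Finset.univ \ {a, b})) := fun σ hσ =>
    mem_prodSet_doubleStarSwaps _ hab (by simp) (by simp) hσ (hV.symm ▸ Finset.subset_univ _)
  rw [permComplete_iff]
  intro g hg
  rw [← sign_eq_of_mem_prodSet (hmem _ (sign_swap hab)), sign_swap hab] at hg
  exact hmem g hg

theorem permComplete_of_swap_mem {u : List (Perm (Fin n))} {a b : Fin n} (hab : a ≠ b)
    (ha : ∀ v, v ≠ a → swap a v ∈ u) (hb : ∀ v, v ≠ b → swap b v ∈ u) : PermComplete u := by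
  refine (permComplete_doubleStarSwaps hab).of_subperm
    ((doubleStarSwaps_nodup hab (by simp) (by simp)).subperm fun g hg => ?_)
  simp only [doubleStarSwaps, bipartiteSwaps, List.mem_cons, List.mem_append, List.mem_map,
    Finset.mem_toList, Finset.mem_sdiff, Finset.mem_insert, Finset.mem_singleton] at hg
  rcases hg with rfl | ⟨v, ⟨-, hv⟩, rfl⟩ | ⟨v, ⟨-, hv⟩, rfl⟩
  · exact ha b hab.symm
  · exact ha v fun h => hv (.inl h)
  · exact hb v fun h => hv (.inr h)

theorem stmt_8 :
    (∀ n : ℕ, 2 ≤ n → ∀ u : List (Equiv.Perm (Fin n)),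
      IsTranspositional u → u.Nodup →
      (∀ v : Fin n, ∃ g ∈ u, v ∈ g.support) →
      (TranspGraph u).Connected →
      (∃ a b : Fin n, a ≠ b ∧
        (∀ v : Fin n, v ≠ a → (TranspGraph u).Adj a v) ∧
        (∀ v : Fin n, v ≠ b → (TranspGraph u).Adj b v)) →
      PermComplete u) ∧
    (∀ n : ℕ, 2 ≤ n → ∀ u : List (Equiv.Perm (Fin n)),
      u.Nodup →
      (∀ g : Equiv.Perm (Fin n), g ∈ u ↔ ∃ x y : Fin n, x ≠ y ∧ g = Equiv.swap x y) →
      PermComplete u) := by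
  refine ⟨fun n _ u _ _ _ _ ⟨a, b, hab, ha, hb⟩ =>
    permComplete_of_swap_mem hab (fun v hv => (ha v hv).2) (fun v hv => (hb v hv).2),
    fun n hn u _ hall => ?_⟩
  have hswap : ∀ x y : Fin n, x ≠ y → swap x y ∈ u := fun x y hxy => (hall _).2 ⟨x, y, hxy, rfl⟩
  have h01 : (⟨0, by omega⟩ : Fin n) ≠ ⟨1, by omega⟩ := by simp
  exact permComplete_of_swap_mem h01 (fun v hv => hswap _ _ hv.symm)
    (fun v hv => hswap _ _ hv.symm)
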